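/- Fix natural numbers a, b, c. The number of chains of type (a,b) of colored integers in {1,...,c} × {red, blue} equals the number of 4-tuples (w, A, B, C) where w is a natural number, A ⊆ {1,...,a} with |A| = w, B ⊆ {1,...,b} with |B| = w, and C ⊆ {1,...,c+w} with |C| = a+b. -/

import Mathlib

/-! A chain is determined by its set of elements, that is by its sets of red values and of blue
values, subsets of `[c]` of sizes `a` and `b`; so the left side is `C(c,a) C(c,b)`. The right side
is `∑ w, C(a,w) C(b,w) C(c+w,a+b)`. Expanding `C(c+w,a+b)` by Vandermonde over `c + w` and summing
over `w` first turns it into `∑_{i+j=a+b} C(c,i) C(i,a) C(a,j)`, which counts the pairs (red set,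
blue set) by the size `i` of their union and the size `j` of their intersection. -/

open Finset

namespace Nat

theorem choose_mul_choose_eq_of_le {a w : ℕ} (j : ℕ) (hw : w ≤ a) :
    a.choose w * w.choose j = a.choose j * (a - j).choose (a - w) := by
  rcases le_or_gt j w with hjw | hwj
  · rw [choose_mul hjw, choose_symm_of_eq_add (by omega : a - j = w - j + (a - w))]
  · rcases le_or_gt j a with hja | haj
    · rw [choose_eq_zero_of_lt hwj, choose_eq_zero_of_lt (by omega : a - j < a - w), mul_zero,
        mul_zero]
    · rw [choose_eq_zero_of_lt hwj, choose_eq_zero_of_lt haj, mul_zero, zero_mul]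

theorem sum_range_choose_mul_choose_mul_choose (a b j : ℕ) :
    ∑ w ∈ range (a + 1), a.choose w * b.choose w * w.choose j
      = a.choose j * (a - j + b).choose a := by
  calc ∑ w ∈ range (a + 1), a.choose w * b.choose w * w.choose j
      = ∑ w ∈ range (a + 1), a.choose j * ((a - j).choose (a - w) * b.choose w) := by
        refine sum_congr rfl fun w hw => ?_
        rw [mul_right_comm, choose_mul_choose_eq_of_le j (mem_range_succ_iff.mp hw)]
        ring
    _ = a.choose j * (a - j + b).choose a := by
        rw [← mul_sum, add_choose_eq, ← Nat.sum_antidiagonal_swap]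
        exact congrArg _ (Nat.sum_antidiagonal_eq_sum_range_succ
          (fun k l => (a - j).choose l * b.choose k) a).symm

theorem sum_antidiagonal_add_eq_of_fst_lt {M : Type*} [AddCommMonoid M] {a : ℕ} (b : ℕ)
    (f : ℕ × ℕ → M) (hf : ∀ p : ℕ × ℕ, p.1 < a → f p = 0) :
    ∑ p ∈ antidiagonal (a + b), f p = ∑ p ∈ antidiagonal b, f (p.1 + a, p.2) := by
  rw [← sum_filter_of_ne (p := fun p : ℕ × ℕ => a ≤ p.1) fun p _ h => by
      contrapose! h; exact hf p h,
    Nat.antidiagonal_filter_le_fst_of_le (Nat.le_add_right a b), sum_map,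
    Nat.add_sub_cancel_left]
  rfl

theorem choose_mul_choose_eq_sum_antidiagonal (a b c : ℕ) :
    c.choose a * c.choose b
      = ∑ p ∈ antidiagonal (a + b), c.choose p.1 * p.1.choose a * a.choose p.2 := by
  rw [sum_antidiagonal_add_eq_of_fst_lt b _ fun p hp => by rw [choose_eq_zero_of_lt hp]; ring]
  simp only [choose_mul (Nat.le_add_left a _), Nat.add_sub_cancel, mul_assoc, ← mul_sum]
  rcases le_or_gt a c with hac | hca
  · rw [← add_choose_eq, Nat.sub_add_cancel hac]
  · rw [choose_eq_zero_of_lt hca, zero_mul, zero_mul]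

theorem sum_range_choose_mul_choose_mul_add_choose (a b c : ℕ) :
    ∑ w ∈ range (a + 1), a.choose w * b.choose w * (c + w).choose (a + b)
      = c.choose a * c.choose b := by
  calc ∑ w ∈ range (a + 1), a.choose w * b.choose w * (c + w).choose (a + b)
      = ∑ p ∈ antidiagonal (a + b), c.choose p.1 *
          ∑ w ∈ range (a + 1), a.choose w * b.choose w * w.choose p.2 := by
        simp only [add_choose_eq, mul_sum]
        rw [sum_comm]
        refine sum_congr rfl fun p _ => sum_congr rfl fun w _ => by ring
    _ = ∑ p ∈ antidiagonal (a + b), c.choose p.1 * p.1.choose a * a.choose p.2 := by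
        refine sum_congr rfl fun p hp => ?_
        rw [sum_range_choose_mul_choose_mul_choose]
        rw [HasAntidiagonal.mem_antidiagonal] at hp
        rcases le_or_gt p.2 a with h | h
        · rw [show a - p.2 + b = p.1 by omega]; ring
        · rw [choose_eq_zero_of_lt h]; ring
    _ = c.choose a * c.choose b := (choose_mul_choose_eq_sum_antidiagonal a b c).symm

end Nat

section StrictMono

variable {α : Type*} [LinearOrder α]

def strictMonoEquivFinsetCard (n : ℕ) :
    {x : Fin n → α // StrictMono x} ≃ {s : Finset α // s.card = n} where
  toFun x := ⟨univ.image x.1, by rw [card_image_of_injective _ x.2.injective, card_fin]⟩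
  invFun s := ⟨s.1.orderEmbOfFin s.2, (s.1.orderEmbOfFin s.2).strictMono⟩
  left_inv x := Subtype.ext
    (orderEmbOfFin_unique _ (fun i => mem_image_of_mem _ (mem_univ i)) x.2).symm
  right_inv s := Subtype.ext <| coe_injective <| by simp

theorem Nat.card_strictMono_card_filter (n k : ℕ) (p : α → Prop) [DecidablePred p] :
    Nat.card {x : Fin n → α // StrictMono x ∧ (univ.filter fun i => p (x i)).card = k}
      = Nat.card {s : Finset α // s.card = n ∧ (s.filter p).card = k} :=
  Nat.card_congr <| (Equiv.subtypeSubtypeEquivSubtypeInter _ _).symm.trans <|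
    ((strictMonoEquivFinsetCard n).subtypeEquiv fun x => by
      simp [strictMonoEquivFinsetCard, filter_image,
        Finset.card_image_of_injective _ x.2.injective]).trans
    (Equiv.subtypeSubtypeEquivSubtypeInter _ _)

end StrictMono

theorem Nat.card_finset_card_eq (β : Type*) [Finite β] (k : ℕ) :
    Nat.card {s : Finset β // s.card = k} = (Nat.card β).choose k := by
  have := Fintype.ofFinite β
  rw [Nat.card_eq_fintype_card, Fintype.card_finset_len, Nat.card_eq_fintype_card]

theorem Nat.card_finset_prod_card_eq (β γ δ : Type*) [Finite β] [Finite γ] [Finite δ]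
    (i j k : ℕ) :
    Nat.card {x : Finset β × Finset γ × Finset δ //
        x.1.card = i ∧ x.2.1.card = j ∧ x.2.2.card = k}
      = (Nat.card β).choose i * (Nat.card γ).choose j * (Nat.card δ).choose k := by
  rw [Nat.card_congr ((Equiv.subtypeProdEquivProd (p := fun s : Finset β => s.card = i)
        (q := fun y : Finset γ × Finset δ => y.1.card = j ∧ y.2.card = k)).trans
      (Equiv.prodCongr (Equiv.refl _)
        (Equiv.subtypeProdEquivProd (p := fun s : Finset γ => s.card = j)
          (q := fun s : Finset δ => s.card = k)))),
    Nat.card_prod, Nat.card_prod, Nat.card_finset_card_eq, Nat.card_finset_card_eq,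
    Nat.card_finset_card_eq, mul_assoc]

section Split

variable {α : Type*} (p : α → Prop) [DecidablePred p]

def finsetEquivSubtypeProd : Finset α ≃ Finset {x // p x} × Finset {x // ¬ p x} :=
  (Equiv.sumCompl p).symm.finsetCongr.trans Finset.sumEquiv.toEquiv

theorem Nat.card_finset_card_filter [Finite α] (m n : ℕ) :
    Nat.card {s : Finset α // s.card = m + n ∧ (s.filter p).card = m}
      = (Nat.card {x // p x}).choose m * (Nat.card {x // ¬ p x}).choose n := by
  have hcard (s : Finset α) : s.card = m + n ∧ (s.filter p).card = m ↔
      (finsetEquivSubtypeProd p s).1.card = m ∧ (finsetEquivSubtypeProd p s).2.card = n := by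
    have hs : (s.filter p).card + (s.filter (¬ p ·)).card = s.card :=
      card_filter_add_card_filter_not p
    have h1 : (finsetEquivSubtypeProd p s).1 = s.subtype p := by
      ext x; simp [finsetEquivSubtypeProd]
    have h2 : (finsetEquivSubtypeProd p s).2 = s.subtype (¬ p ·) := by
      ext x; simp [finsetEquivSubtypeProd]
    rw [h1, h2, card_subtype, card_subtype]
    omega
  rw [Nat.card_congr (((finsetEquivSubtypeProd p).subtypeEquiv hcard).trans
      (Equiv.subtypeProdEquivProd (p := (·.card = m)) (q := (·.card = n)))),
    Nat.card_prod, Nat.card_finset_card_eq, Nat.card_finset_card_eq]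

end Split

theorem Nat.card_subtype_ofLex_snd_eq (α : Type*) (e : Bool) :
    Nat.card {q : α ×ₗ Bool // (ofLex q).2 = e} = Nat.card α :=
  Nat.card_congr
    { toFun q := (ofLex q.1).1
      invFun x := ⟨toLex (x, e), rfl⟩
      left_inv q := Subtype.ext <| congrArg toLex (Prod.ext rfl q.2.symm)
      right_inv _ := rfl }

theorem Nat.card_sigma_subtype_eq_sum_range {β : ℕ → Type*} [∀ w, Finite (β w)]
    (q : ∀ w, β w → Prop) {N : ℕ} (hq : ∀ w x, q w x → w < N) :
    Nat.card {t : Σ w, β w // q t.1 t.2} = ∑ w ∈ range N, Nat.card {x // q w x} := by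
  let e : {t : Σ w, β w // q t.1 t.2} ≃ Σ w : Fin N, {x // q w x} :=
    { toFun t := ⟨⟨t.1.1, hq _ _ t.2⟩, t.1.2, t.2⟩
      invFun s := ⟨⟨s.1, s.2.1⟩, s.2.2⟩
      left_inv _ := rfl
      right_inv _ := rfl }
  rw [Nat.card_congr e, Nat.card_sigma,
    Fin.sum_univ_eq_sum_range (fun w => Nat.card {x // q w x})]

/-- The number of chains of type `(a,b)` of colored integers in `Fin c × Bool`
(ordered lexicographically, values first, red = `false` < blue = `true`) equals the
number of 4-tuples `(w, A, B, C)` with `A ⊆ [a]`, `|A| = w`, `B ⊆ [b]`, `|B| = w`,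
`C ⊆ [c+w]`, `|C| = a+b`. -/
theorem stmt6 (a b c : ℕ) :
    Nat.card {x : Fin (a + b) → Fin c ×ₗ Bool //
        StrictMono x ∧
          (Finset.univ.filter fun i => (ofLex (x i)).2 = false).card = a}
    = Nat.card {t : Σ w : ℕ, Finset (Fin a) × Finset (Fin b) × Finset (Fin (c + w)) //
        t.2.1.card = t.1 ∧ t.2.2.1.card = t.1 ∧ t.2.2.2.card = a + b} := by
  have hred : Nat.card {q : Fin c ×ₗ Bool // (ofLex q).2 = false} = c := by
    rw [Nat.card_subtype_ofLex_snd_eq, Nat.card_fin]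
  have hblue : Nat.card {q : Fin c ×ₗ Bool // ¬ (ofLex q).2 = false} = c := by
    simp only [Bool.not_eq_false]
    rw [Nat.card_subtype_ofLex_snd_eq, Nat.card_fin]
  rw [Nat.card_strictMono_card_filter _ _ fun q : Fin c ×ₗ Bool => (ofLex q).2 = false,
    Nat.card_finset_card_filter, hred, hblue,
    Nat.card_sigma_subtype_eq_sum_range
      (fun w (x : Finset (Fin a) × Finset (Fin b) × Finset (Fin (c + w))) =>
        x.1.card = w ∧ x.2.1.card = w ∧ x.2.2.card = a + b)
      fun w x hx => hx.1 ▸ Nat.lt_succ_of_le ((card_le_univ x.1).trans_eq (Fintype.card_fin a)),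
    ← Nat.sum_range_choose_mul_choose_mul_add_choose]
  refine sum_congr rfl fun w _ => ?_
  rw [Nat.card_finset_prod_card_eq, Nat.card_fin, Nat.card_fin, Nat.card_fin]
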